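/- arXiv:2404.10532 — 2 statements merged into one kernel-verified Lean document; each statement's English description precedes it below -/
import Mathlib

section
/- For every integer n ≥ 2, the Littlewood decomposition Φ_n, which sends a partition λ to the pair consisting of its n-core ω = core_n(λ) and its n-quotient (ν^(0),…,ν^(n−1)) = quot_n(λ), is a bijection from the set 𝒫 of all partitions onto 𝒞_n × 𝒫^n, where 𝒞_n is the set of n-cores. -/
open scoped Classical

/-- `p k` is the `(k+1)`-st part `λ_{k+1}` of the partition `λ` :
partitions are encoded by their (eventually zero, antitone) sequence of parts. -/
def IsPartition (p : ℕ → ℕ) : Prop :=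
  Antitone p ∧ ∃ N, ∀ i, N ≤ i → p i = 0

/-- The number of (nonzero) parts of a partition. -/
noncomputable def plen (p : ℕ → ℕ) : ℕ := Nat.card {i : ℕ // p i ≠ 0}

/-- The number of boxes `|λ|` of a partition. -/
noncomputable def psize (p : ℕ → ℕ) : ℕ := ∑ i ∈ Finset.range (plen p), p i

/-- The conjugate partition : `pconj p j = λ^tr_{j+1}`. -/
noncomputable def pconj (p : ℕ → ℕ) (j : ℕ) : ℕ := Nat.card {i : ℕ // j + 1 ≤ p i}

/-- The size of the Durfee square of a partition. -/
noncomputable def durfee (p : ℕ → ℕ) : ℕ := Nat.card {i : ℕ // i + 1 ≤ p i}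

/-- The cells (boxes) of the Young diagram, `0`-indexed : `(i, j)` is the box in
row `i+1` and column `j+1`. -/
noncomputable def cells (p : ℕ → ℕ) : Finset (ℕ × ℕ) :=
  (Finset.range (plen p) ×ˢ Finset.range (p 0)).filter fun s => s.2 < p s.1

/-- The hook length of the (0-indexed) box `(i, j)` :
`h = λ_{i+1} - (j+1) + λ^tr_{j+1} - (i+1) + 1`. -/
noncomputable def hookLen (p : ℕ → ℕ) (i j : ℕ) : ℕ :=
  (p i - j) + (pconj p j - i) - 1

/-- The multiset of hook lengths `ℋ(λ)`. -/
noncomputable def hooks (p : ℕ → ℕ) : Multiset ℕ :=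
  (cells p).val.map fun s => hookLen p s.1 s.2

/-- The multiset of hook lengths of the boxes strictly above the main diagonal. -/
noncomputable def hooksAbove (p : ℕ → ℕ) : Multiset ℕ :=
  ((cells p).filter fun s => s.1 < s.2).val.map fun s => hookLen p s.1 s.2

/-- The multiset of hook lengths of the boxes strictly below the main diagonal. -/
noncomputable def hooksBelow (p : ℕ → ℕ) : Multiset ℕ :=
  ((cells p).filter fun s => s.2 < s.1).val.map fun s => hookLen p s.1 s.2

/-- `p` is an `n`-core : no hook length is equal to `n`. -/
def IsCore (n : ℕ) (p : ℕ → ℕ) : Prop := n ∉ hooks p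

/-- Self-conjugate partitions. -/
def SelfConj (p : ℕ → ℕ) : Prop := p = pconj p

/-- Distinct partitions (strictly decreasing nonzero parts). -/
def IsDistinct (p : ℕ → ℕ) : Prop := ∀ i, p (i + 1) ≠ 0 → p (i + 1) < p i

/-- Doubled distinct partitions : `λ_i = λ^tr_i + 1` for `i` at most
the size of the Durfee square. -/
def IsDD (p : ℕ → ℕ) : Prop := ∀ i < durfee p, p i = pconj p i + 1

/-- Conjugates of doubled distinct partitions. -/
def IsDDtr (p : ℕ → ℕ) : Prop := ∃ q, IsPartition q ∧ IsDD q ∧ p = pconj q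

/-- The doubled distinct partition `λ̄λ̄` of a distinct partition `λ̄` :
add `λ̄_i` boxes to the `i`-th column of the shifted Young diagram of `λ̄`. -/
noncomputable def double (b : ℕ → ℕ) : ℕ → ℕ := fun i =>
  if i < plen b then b i + (i + 1)
  else Nat.card {j : ℕ // j < plen b ∧ i + 1 ≤ b j + j}

/-- The self-conjugate partition associated with a distinct partition `λ̄` :
add `λ̄_i - 1` boxes to the `i`-th column of the shifted Young diagram of `λ̄`. -/
noncomputable def scOf (b : ℕ → ℕ) : ℕ → ℕ := fun i =>
  if i < plen b then b i + i
  else Nat.card {j : ℕ // j < plen b ∧ i + 1 ≤ b j + j}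

/-- The binary word `ψ(λ) = (c_k)_{k ∈ ℤ}` of a partition :
`c_k = 0` iff `k ∈ {λ_i - i : i ≥ 1}` and `c_k = 1` otherwise
(i.e. iff `k ∈ {j - λ^tr_j - 1 : j ≥ 1}`). -/
noncomputable def word (p : ℕ → ℕ) (k : ℤ) : ℕ :=
  if ∃ m : ℕ, k = (p m : ℤ) - ((m : ℤ) + 1) then 0 else 1

/-- The `g`-charge of a `g`-core : `m_i = min {k ∈ ℤ : c_{kg+i} = 1}`. -/
noncomputable def ncharge (g : ℕ) (p : ℕ → ℕ) (i : ℕ) : ℤ :=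
  sInf {k : ℤ | word p (k * (g : ℤ) + (i : ℤ)) = 1}

/-- The subword of residue `k` modulo `g` of the word of `p`. -/
noncomputable def subword (g k : ℕ) (p : ℕ → ℕ) (i : ℤ) : ℕ :=
  word p ((g : ℤ) * i + (k : ℤ))

/-- The shift turning the subword of residue `k` into a balanced partition word. -/
noncomputable def qcharge (g : ℕ) (p : ℕ → ℕ) (k : ℕ) : ℤ :=
  (Nat.card {i : ℕ // subword g k p (i : ℤ) = 0} : ℤ) -
    (Nat.card {i : ℕ // subword g k p (-((i : ℤ) + 1)) = 1} : ℤ)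

/-- `ν` is the `k`-th component of the `g`-quotient of `p` : its word is the
subword of residue `k` of the word of `p`, reindexed so as to be balanced. -/
def IsQuotientAt (g : ℕ) (p : ℕ → ℕ) (k : ℕ) (ν : ℕ → ℕ) : Prop :=
  ∀ i : ℤ, word ν i = subword g k p (i + qcharge g p k)

/-- `ω` is the `g`-core of `p` : every subword of its word is sorted
(all `0`'s, then all `1`'s), with transition index the charge of `p`. -/
def IsCoreOf (g : ℕ) (p ω : ℕ → ℕ) : Prop :=
  ∀ k < g, ∀ i : ℤ, (subword g k ω i = 1 ↔ qcharge g p k ≤ i)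

/-- `(ω, ν)` is the Littlewood decomposition of `p` for the modulus `g`. -/
def IsLittlewood (g : ℕ) (p ω : ℕ → ℕ) (ν : ℕ → ℕ → ℕ) : Prop :=
  IsCoreOf g p ω ∧ ∀ k < g, IsQuotientAt g p k (ν k)

/-- The number `a_r` of boxes of residue `r` modulo `g`
(the residue of the box `(i, j)` -- `0`-indexed -- being `(j - i) mod g`). -/
noncomputable def resCount (g : ℕ) (p : ℕ → ℕ) (r : ℕ) : ℕ :=
  ((cells p).filter fun s => ((s.2 : ℤ) - (s.1 : ℤ)) % (g : ℤ) = (r : ℤ)).card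

/-- The rectangular partition with `r` rows of length `c`. -/
def rect (r c : ℕ) : ℕ → ℕ := fun i => if i < r then c else 0

/-- The statistic `m = max({1} ∪ {(g + λ̄_i)/g : λ̄_i ≡ 0 (mod g)})`. -/
noncomputable def mStat (g : ℕ) (b : ℕ → ℕ) : ℕ :=
  sSup ({1} ∪ {k : ℕ | ∃ i < plen b, g ∣ b i ∧ k = (g + b i) / g})

/-- The statistic `m' = max({0} ∪ {λ̄_i/g : λ̄_i ≡ g/2 (mod g)})`. -/
noncomputable def mStat' (g : ℕ) (b : ℕ → ℕ) : ℕ :=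
  sSup ({0} ∪ {k : ℕ | ∃ i < plen b, 2 * (b i % g) = g ∧ k = b i / g})

/-!
A partition is the same thing as a balanced Maya diagram: its word `ψ(λ)` is `0` far to the
left and `1` far to the right, and has charge `0`; conversely every such word is the word of a
unique partition. Cutting a Maya diagram into its `n` residue classes gives `n` Maya diagrams
whose charges add up to the charge of the whole, and shifting a diagram by `d` lowers its charge
by `d`. So the residue subwords of `ψ(λ)`, each shifted by its own charge, are balanced: they are
the words of the quotient. Replacing each residue subword by the sorted word of the same charge
keeps the total charge `0`, hence gives the word of a partition; it is an `n`-core because a hook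
of length `n` is a `1` at some position `j` followed by a `0` at `j + n`. Conversely, a core and
`n` partitions are reassembled by interleaving, the charges of the sorted subwords of the core
giving the shifts; both constructions are determined by the words, so they are mutually inverse.
-/

open Filter Finset

def IsMaya (w : ℤ → ℕ) : Prop :=
  (∀ k, w k ≤ 1) ∧ (∀ᶠ k in atBot, w k = 0) ∧ ∀ᶠ k in atTop, w k = 1

noncomputable def charge (w : ℤ → ℕ) : ℤ :=
  (Nat.card {i : ℕ // w (i : ℤ) = 0} : ℤ) -
    (Nat.card {i : ℕ // w (-((i : ℤ) + 1)) = 1} : ℤ)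

lemma natCard_comp_eq_card_filter {f : ℕ → ℤ} (hf : Function.Injective f) {P : ℤ → Prop}
    [DecidablePred P] {s : Finset ℤ} (hs : ∀ j ∈ s, j ∈ Set.range f)
    (hP : ∀ i, P (f i) → f i ∈ s) :
    Nat.card {i // P (f i)} = #{j ∈ s | P j} := by
  rw [← Set.ncard_coe_finset, ← Set.ncard_preimage_of_injective_subset_range hf
    (fun j hj => hs j (Finset.mem_filter.1 hj).1), ← Nat.card_coe_set_eq]
  exact Nat.card_congr (Equiv.subtypeEquivRight fun i => by simpa using fun h => hP i h)

lemma charge_eq_card_Ico {w : ℤ → ℕ} (hw : ∀ k, w k ≤ 1) {M N : ℤ} (hM : M ≤ 0)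
    (hN : 0 ≤ N) (h0 : ∀ k < M, w k = 0) (h1 : ∀ k, N ≤ k → w k = 1) :
    charge w = #{k ∈ Ico M N | w k = 0} + M := by
  have hzeros : Nat.card {i : ℕ // w i = 0} = #{k ∈ Ico 0 N | w k = 0} :=
    natCard_comp_eq_card_filter (P := fun k => w k = 0) (s := Ico 0 N) Nat.cast_injective
      (fun j hj => ⟨j.toNat, by rw [mem_Ico] at hj; omega⟩)
      (fun i hi => by simp only [mem_Ico]; by_contra h; have := h1 i (by omega); omega)
  have hones : Nat.card {i : ℕ // w (-((i : ℤ) + 1)) = 1} = #{k ∈ Ico M 0 | w k = 1} :=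
    natCard_comp_eq_card_filter (f := fun i : ℕ => -((i : ℤ) + 1)) (P := fun k => w k = 1)
      (s := Ico M 0) (fun a b h => by simp only [neg_inj, add_left_inj, Nat.cast_inj] at h; exact h)
      (fun j hj => ⟨(-j - 1).toNat, by rw [mem_Ico] at hj; dsimp only; omega⟩)
      (fun i hi => by
        simp only [mem_Ico]
        by_contra h
        have := h0 (-((i : ℤ) + 1)) (by omega)
        omega)
  have hsplit : #{k ∈ Ico M N | w k = 0} =
      #{k ∈ Ico M 0 | w k = 0} + #{k ∈ Ico 0 N | w k = 0} := by
    rw [← Ico_union_Ico_eq_Ico hM hN, filter_union, card_union_of_disjoint]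
    exact disjoint_filter_filter (Ico_disjoint_Ico_consecutive M 0 N)
  have hneg : #{k ∈ Ico M 0 | w k = 0} + #{k ∈ Ico M 0 | w k = 1} = #(Ico M 0) := by
    rw [← card_filter_add_card_filter_not (s := Ico M 0) (fun k => w k = 0)]
    congr 2
    exact filter_congr fun k _ => by have := hw k; omega
  rw [Int.card_Ico] at hneg
  unfold charge
  omega

lemma IsMaya.eventually_charge_eq {w : ℤ → ℕ} (hw : IsMaya w) :
    ∀ᶠ x : ℤ × ℤ in atBot ×ˢ atTop, charge w = #{k ∈ Ico x.1 x.2 | w k = 0} + x.1 := by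
  have hbot : ∀ᶠ M in atBot, M ≤ 0 ∧ ∀ k ≤ M, w k = 0 :=
    (eventually_le_atBot 0).and (eventually_forall_le_atBot.2 hw.2.1)
  have htop : ∀ᶠ N in atTop, 0 ≤ N ∧ ∀ k, N ≤ k → w k = 1 :=
    (eventually_ge_atTop 0).and (eventually_forall_ge_atTop.2 hw.2.2)
  filter_upwards [hbot.prod_mk htop] with x ⟨⟨hM, h0⟩, hN, h1⟩
  exact charge_eq_card_Ico hw.1 hM hN (fun k hk => h0 k hk.le) h1

lemma IsMaya.comp_add_const {w : ℤ → ℕ} (hw : IsMaya w) (d : ℤ) :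
    IsMaya (fun i => w (i + d)) :=
  ⟨fun _ => hw.1 _, (tendsto_atBot_add_const_right _ d tendsto_id).eventually hw.2.1,
    (tendsto_atTop_add_const_right _ d tendsto_id).eventually hw.2.2⟩

lemma IsMaya.charge_comp_add_const {w : ℤ → ℕ} (hw : IsMaya w) (d : ℤ) :
    charge (fun i => w (i + d)) = charge w - d := by
  have hshift : Tendsto (Prod.map (· + d) (· + d)) (atBot ×ˢ atTop) (atBot ×ˢ atTop) :=
    (tendsto_atBot_add_const_right _ d tendsto_id).prodMap
      (tendsto_atTop_add_const_right _ d tendsto_id)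
  obtain ⟨⟨M, N⟩, h1, h2⟩ := ((hw.comp_add_const d).eventually_charge_eq.and
    (hshift.eventually hw.eventually_charge_eq)).exists
  have hcard : #{k ∈ Ico M N | w (k + d) = 0} = #{k ∈ Ico (M + d) (N + d) | w k = 0} :=
    card_nbij' (· + d) (· - d)
      (fun k hk => by simp only [coe_filter, Set.mem_ofPred_eq, mem_Ico] at hk ⊢; omega)
      (fun k hk => by
        simp only [coe_filter, Set.mem_ofPred_eq, mem_Ico, sub_add_cancel] at hk ⊢
        omega)
      (fun k _ => add_sub_cancel_right k d) (fun k _ => sub_add_cancel k d)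
  simp only [Prod.map_fst, Prod.map_snd] at h1 h2
  omega

def stepWord (t i : ℤ) : ℕ := if i < t then 0 else 1

lemma isMaya_stepWord (t : ℤ) : IsMaya (stepWord t) :=
  ⟨fun i => by unfold stepWord; split <;> omega,
    (eventually_lt_atBot t).mono fun i hi => if_pos hi,
    (eventually_ge_atTop t).mono fun i hi => if_neg (not_lt.2 hi)⟩

lemma monotone_stepWord (t : ℤ) : Monotone (stepWord t) := fun i j hij => by
  unfold stepWord
  split_ifs <;> omega

lemma charge_stepWord (t : ℤ) : charge (stepWord t) = t := by
  have hfilter :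
      ({k ∈ Ico (min t 0) (max t 0) | stepWord t k = 0} : Finset ℤ) = Ico (min t 0) t := by
    ext k
    rw [Finset.mem_filter, mem_Ico, mem_Ico, stepWord]
    split <;> omega
  rw [charge_eq_card_Ico (isMaya_stepWord t).1 (min_le_right t 0) (le_max_right t 0)
    (fun k hk => if_pos (by omega)) (fun k hk => if_neg (by omega)), hfilter, Int.card_Ico]
  omega

lemma IsMaya.eq_stepWord_of_monotone {w : ℤ → ℕ} (hw : IsMaya w) (hmono : Monotone w) :
    w = stepWord (charge w) := by
  obtain ⟨A, hA⟩ := eventually_atBot.1 hw.2.1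
  obtain ⟨B, hB⟩ := eventually_atTop.1 hw.2.2
  obtain ⟨t, ht, hmin⟩ := Int.exists_least_of_bdd (P := fun i => w i = 1)
    ⟨A + 1, fun i hi => by by_contra h; have := hA i (by omega); omega⟩ ⟨B, hB B le_rfl⟩
  suffices w = stepWord t by rw [this, charge_stepWord]
  funext i
  unfold stepWord
  split_ifs with h
  · have := hw.1 i
    have := mt (hmin i) (not_le.2 h)
    omega
  · exact le_antisymm (hw.1 i) (ht ▸ hmono (not_lt.1 h))

-- `subword g k p` and `qcharge g p k` are, by definition, `modSubword g k (word p)` and its charge.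
def modSubword (g k : ℕ) (w : ℤ → ℕ) (i : ℤ) : ℕ := w ((g : ℤ) * i + (k : ℤ))

noncomputable def interleave (g : ℕ) (v : ℕ → ℤ → ℕ) (j : ℤ) : ℕ :=
  v (j % (g : ℤ)).toNat (j / (g : ℤ))

section Interleave

variable {g : ℕ} (hg : 0 < g)
include hg

lemma emod_toNat_lt (j : ℤ) : (j % (g : ℤ)).toNat < g := by
  have := Int.emod_lt_of_pos j (Int.natCast_pos.2 hg)
  have := Int.emod_nonneg j (Int.natCast_ne_zero.2 hg.ne')
  omega

lemma mul_ediv_add_emod_toNat (j : ℤ) : (g : ℤ) * (j / g) + (j % (g : ℤ)).toNat = j := by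
  have := Int.emod_nonneg j (Int.natCast_ne_zero.2 hg.ne')
  rw [Int.toNat_of_nonneg this, Int.mul_ediv_add_emod]

lemma ediv_emod_toNat_mul_add {k : ℕ} (hk : k < g) (i : ℤ) :
    ((g : ℤ) * i + k) / g = i ∧ (((g : ℤ) * i + k) % (g : ℤ)).toNat = k := by
  have h := (Int.ediv_emod_unique (a := (g : ℤ) * i + k) (r := k) (q := i)
    (Int.natCast_pos.2 hg)).2 ⟨by ring, by positivity, by exact_mod_cast hk⟩
  exact ⟨h.1, by rw [h.2, Int.toNat_natCast]⟩

lemma tendsto_natCast_mul_atBot : Tendsto (fun i : ℤ => (g : ℤ) * i) atBot atBot :=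
  (tendsto_id.atBot_mul_const' (Int.natCast_pos.2 hg)).congr fun i => mul_comm i g

lemma tendsto_natCast_mul_atTop : Tendsto (fun i : ℤ => (g : ℤ) * i) atTop atTop :=
  tendsto_id.const_mul_atTop' (Int.natCast_pos.2 hg)

lemma tendsto_ediv_natCast_atBot : Tendsto (fun j : ℤ => j / g) atBot atBot :=
  Monotone.tendsto_atBot_atBot (fun _ _ h => Int.ediv_le_ediv (Int.natCast_pos.2 hg) h)
    fun b => ⟨g * b, (Int.mul_ediv_cancel_left b (Int.natCast_ne_zero.2 hg.ne')).le⟩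

lemma tendsto_ediv_natCast_atTop : Tendsto (fun j : ℤ => j / g) atTop atTop :=
  Monotone.tendsto_atTop_atTop (fun _ _ h => Int.ediv_le_ediv (Int.natCast_pos.2 hg) h)
    fun b => ⟨g * b, (Int.mul_ediv_cancel_left b (Int.natCast_ne_zero.2 hg.ne')).ge⟩

lemma modSubword_interleave {k : ℕ} (hk : k < g) (v : ℕ → ℤ → ℕ) :
    modSubword g k (interleave g v) = v k := by
  funext i
  obtain ⟨hdiv, hmod⟩ := ediv_emod_toNat_mul_add hg hk i
  rw [modSubword, interleave, hdiv, hmod]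

lemma interleave_modSubword (w : ℤ → ℕ) : interleave g (fun k => modSubword g k w) = w := by
  funext j
  rw [interleave, modSubword, mul_ediv_add_emod_toNat hg]

lemma isMaya_modSubword {w : ℤ → ℕ} (hw : IsMaya w) (k : ℕ) : IsMaya (modSubword g k w) :=
  ⟨fun _ => hw.1 _,
    (tendsto_atBot_add_const_right _ _ (tendsto_natCast_mul_atBot hg)).eventually hw.2.1,
    (tendsto_atTop_add_const_right _ _ (tendsto_natCast_mul_atTop hg)).eventually hw.2.2⟩

lemma interleave_congr {v v' : ℕ → ℤ → ℕ} (h : ∀ k < g, v k = v' k) :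
    interleave g v = interleave g v' :=
  funext fun j => congrFun (h _ (emod_toNat_lt hg j)) _

lemma isMaya_interleave {v : ℕ → ℤ → ℕ} (hv : ∀ k < g, IsMaya (v k)) :
    IsMaya (interleave g v) := by
  have hbot : ∀ᶠ i in atBot, ∀ k ∈ range g, v k i = 0 :=
    (eventually_all_finset _).2 fun k hk => (hv k (mem_range.1 hk)).2.1
  have htop : ∀ᶠ i in atTop, ∀ k ∈ range g, v k i = 1 :=
    (eventually_all_finset _).2 fun k hk => (hv k (mem_range.1 hk)).2.2
  refine ⟨fun j => (hv _ (emod_toNat_lt hg j)).1 _, ?_, ?_⟩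
  · filter_upwards [(tendsto_ediv_natCast_atBot hg).eventually hbot] with j hj
    exact hj _ (mem_range.2 (emod_toNat_lt hg j))
  · filter_upwards [(tendsto_ediv_natCast_atTop hg).eventually htop] with j hj
    exact hj _ (mem_range.2 (emod_toNat_lt hg j))

lemma card_filter_Ico_mul (P : ℤ → Prop) [DecidablePred P] (M N : ℤ) :
    #{j ∈ Ico ((g : ℤ) * M) ((g : ℤ) * N) | P j} =
      ∑ k ∈ range g, #{i ∈ Ico M N | P ((g : ℤ) * i + k)} := by
  have hg' : (0 : ℤ) < g := Int.natCast_pos.2 hg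
  rw [← card_sigma]
  refine card_nbij' (fun j => ⟨(j % (g : ℤ)).toNat, j / g⟩) (fun x => (g : ℤ) * x.2 + x.1)
    (fun j hj => ?_) (fun x hx => ?_) (fun j _ => mul_ediv_add_emod_toNat hg j) (fun x hx => ?_)
  · simp only [coe_filter, Set.mem_ofPred_eq, mem_Ico, coe_sigma, Set.mem_sigma_iff, coe_range,
      Set.mem_Iio] at hj ⊢
    refine ⟨emod_toNat_lt hg j, ⟨(Int.le_ediv_iff_mul_le hg').2 (by linarith [mul_comm M g]),
      (Int.ediv_lt_iff_lt_mul hg').2 (by linarith [mul_comm N g])⟩, ?_⟩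
    rw [mul_ediv_add_emod_toNat hg]
    exact hj.2
  · simp only [coe_filter, Set.mem_ofPred_eq, mem_Ico, coe_sigma, Set.mem_sigma_iff, coe_range,
      Set.mem_Iio] at hx ⊢
    obtain ⟨hk, ⟨hM, hN⟩, hP⟩ := hx
    have hk' : (x.1 : ℤ) < g := by exact_mod_cast hk
    exact ⟨⟨by nlinarith, by nlinarith⟩, hP⟩
  · obtain ⟨hdiv, hmod⟩ := ediv_emod_toNat_mul_add hg (mem_range.1 (mem_sigma.1 hx).1) x.2
    dsimp only
    rw [hdiv, hmod]

lemma IsMaya.charge_eq_sum_charge_modSubword {w : ℤ → ℕ} (hw : IsMaya w) :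
    charge w = ∑ k ∈ range g, charge (modSubword g k w) := by
  have hsub : ∀ᶠ x : ℤ × ℤ in atBot ×ˢ atTop, ∀ k ∈ range g,
      charge (modSubword g k w) = #{i ∈ Ico x.1 x.2 | w ((g : ℤ) * i + k) = 0} + x.1 :=
    (eventually_all_finset _).2 fun k _ => (isMaya_modSubword hg hw k).eventually_charge_eq
  have hmul :
      Tendsto (Prod.map ((g : ℤ) * ·) ((g : ℤ) * ·)) (atBot ×ˢ atTop) (atBot ×ˢ atTop) :=
    (tendsto_natCast_mul_atBot hg).prodMap (tendsto_natCast_mul_atTop hg)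
  obtain ⟨⟨M, N⟩, h1, h2⟩ := ((hmul.eventually hw.eventually_charge_eq).and hsub).exists
  simp only [Prod.map_fst, Prod.map_snd] at h1 h2
  rw [h1, card_filter_Ico_mul hg, sum_congr rfl h2, sum_add_distrib, sum_const, card_range,
    nsmul_eq_mul]
  push_cast
  ring

lemma charge_interleave {v : ℕ → ℤ → ℕ} (hv : ∀ k < g, IsMaya (v k)) :
    charge (interleave g v) = ∑ k ∈ range g, charge (v k) := by
  rw [(isMaya_interleave hg hv).charge_eq_sum_charge_modSubword hg]
  exact sum_congr rfl fun k hk => by rw [modSubword_interleave hg (mem_range.1 hk)]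

end Interleave

lemma eq_of_forall_eq_zero_iff {v w : ℤ → ℕ} (hv : ∀ k, v k ≤ 1) (hw : ∀ k, w k ≤ 1)
    (h : ∀ k, v k = 0 ↔ w k = 0) : v = w :=
  funext fun k => by have := hv k; have := hw k; have := h k; omega

def zeroPos (p : ℕ → ℕ) (m : ℕ) : ℤ := (p m : ℤ) - ((m : ℤ) + 1)

section Word

variable {p : ℕ → ℕ}

lemma word_le_one (p : ℕ → ℕ) (k : ℤ) : word p k ≤ 1 := by
  unfold word; split <;> omega

lemma word_eq_zero_iff {k : ℤ} : word p k = 0 ↔ k ∈ Set.range (zeroPos p) := by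
  unfold word zeroPos; split <;> simp_all [eq_comm]

lemma zeroPos_strictAnti (hp : IsPartition p) : StrictAnti (zeroPos p) :=
  strictAnti_nat_of_succ_lt fun m => by
    have := hp.1 (Nat.le_add_right m 1)
    unfold zeroPos; push_cast; omega

lemma word_injective {q : ℕ → ℕ} (hp : IsPartition p) (hq : IsPartition q)
    (h : word p = word q) : p = q := by
  have hrange : Set.range (zeroPos p) = Set.range (zeroPos q) := by
    ext k; rw [← word_eq_zero_iff, h, word_eq_zero_iff]
  have hz := ((zeroPos_strictAnti hp).neg.range_inj (zeroPos_strictAnti hq).neg).1 (by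
    simp only [← Function.comp_def Neg.neg, Set.range_comp, hrange])
  funext m
  have := congrFun hz m
  unfold zeroPos at this
  omega

lemma word_eq_zero_of_lt {N : ℕ} (hN : ∀ i, N ≤ i → p i = 0) {k : ℤ} (hk : k < -N) :
    word p k = 0 :=
  word_eq_zero_iff.2 ⟨(-k - 1).toNat, by rw [zeroPos, hN _ (by omega)]; omega⟩

lemma word_eq_one_of_le (hp : IsPartition p) {k : ℤ} (hk : (p 0 : ℤ) ≤ k) : word p k = 1 := by
  have h := word_le_one p k
  have : word p k ≠ 0 := fun h0 => by
    obtain ⟨m, rfl⟩ := word_eq_zero_iff.1 h0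
    have := hp.1 (Nat.zero_le m)
    unfold zeroPos at hk
    omega
  omega

lemma isMaya_word (hp : IsPartition p) : IsMaya (word p) := by
  obtain ⟨N, hN⟩ := hp.2
  exact ⟨word_le_one p, (eventually_lt_atBot (-N : ℤ)).mono fun k => word_eq_zero_of_lt hN,
    (eventually_ge_atTop (p 0 : ℤ)).mono fun k => word_eq_one_of_le hp⟩

lemma charge_word (hp : IsPartition p) : charge (word p) = 0 := by
  obtain ⟨N, hN⟩ := hp.2
  have hzeros : ({k ∈ Ico (-(N : ℤ)) (p 0) | word p k = 0} : Finset ℤ) =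
      (range N).image (zeroPos p) := by
    ext k
    rw [Finset.mem_filter, mem_Ico, mem_image, word_eq_zero_iff]
    constructor
    · rintro ⟨⟨hlo, -⟩, m, rfl⟩
      refine ⟨m, mem_range.2 ?_, rfl⟩
      by_contra hm
      rw [zeroPos, hN m (by omega)] at hlo
      omega
    · rintro ⟨m, hm, rfl⟩
      have := hp.1 (Nat.zero_le m)
      rw [mem_range] at hm
      exact ⟨⟨by unfold zeroPos; omega, by unfold zeroPos; omega⟩, m, rfl⟩
  rw [charge_eq_card_Ico (word_le_one p) (by omega) (by positivity)
    (fun k hk => word_eq_zero_of_lt hN hk) (fun k hk => word_eq_one_of_le hp hk), hzeros,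
    card_image_of_injective _ (zeroPos_strictAnti hp).injective, card_range]
  omega

end Word

lemma IsMaya.exists_strictAnti_range_eq_zeros {w : ℤ → ℕ} (hw : IsMaya w) :
    ∃ z : ℕ → ℤ, StrictAnti z ∧ Tendsto z atTop atBot ∧
      ∀ k, w k = 0 ↔ k ∈ Set.range z := by
  obtain ⟨A, hA⟩ := eventually_atBot.1 hw.2.1
  obtain ⟨B, hB⟩ := eventually_atTop.1 hw.2.2
  set P : ℕ → Prop := fun t => w (B - t) = 0
  have hinf : (Set.ofPred P).Infinite := Set.infinite_of_forall_exists_gt fun t =>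
    ⟨max (t + 1) (B - A).toNat, hA _ (by omega), by omega⟩
  have hanti : StrictAnti fun m => B - Nat.nth P m := fun a b hab => by
    have := Nat.nth_strictMono hinf hab
    dsimp only
    omega
  refine ⟨_, hanti, ?_, fun k => ⟨fun hk => ?_, ?_⟩⟩
  · simpa only [sub_eq_add_neg, Function.comp_apply] using tendsto_atBot_add_const_left _ B
      (tendsto_neg_atTop_atBot.comp
        (tendsto_natCast_atTop_atTop.comp (Nat.nth_strictMono hinf).tendsto_atTop))
  · have hkB : k < B := by by_contra h; have := hB k (by omega); omega
    obtain ⟨m, hm⟩ : (B - k).toNat ∈ Set.range (Nat.nth P) := by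
      rw [Nat.range_nth_of_infinite hinf]
      show w (B - (B - k).toNat) = 0
      rwa [Int.toNat_of_nonneg (by omega), sub_sub_cancel]
    exact ⟨m, by simp only [hm]; omega⟩
  · rintro ⟨m, rfl⟩
    exact Nat.nth_mem_of_infinite hinf m

lemma IsMaya.natCard_zeros_add_eq {w : ℤ → ℕ} (hw : IsMaya w) {z : ℕ → ℤ}
    (hz : StrictAnti z) (hzeros : ∀ k, w k = 0 ↔ k ∈ Set.range z) (m : ℕ) :
    Nat.card {i : ℕ // w (i + z m) = 0} = m + 1 := by
  obtain ⟨B, hB⟩ := eventually_atTop.1 hw.2.2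
  have hlt : ∀ k, w k = 0 → k < B := fun k hk => by
    by_contra h; have := hB k (not_lt.1 h); omega
  have hfilter : ({k ∈ Ico (z m) B | w k = 0} : Finset ℤ) = (range (m + 1)).image z := by
    ext k
    rw [Finset.mem_filter, mem_Ico, mem_image]
    constructor
    · rintro ⟨⟨hk, -⟩, hk0⟩
      obtain ⟨j, rfl⟩ := (hzeros k).1 hk0
      exact ⟨j, mem_range.2 (Nat.lt_succ_of_le (hz.le_iff_ge.1 hk)), rfl⟩
    · rintro ⟨j, hj, rfl⟩
      rw [mem_range] at hj
      have hj0 := (hzeros (z j)).2 ⟨j, rfl⟩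
      exact ⟨⟨hz.antitone (Nat.le_of_lt_succ hj), hlt _ hj0⟩, hj0⟩
  rw [natCard_comp_eq_card_filter (f := fun i : ℕ => (i : ℤ) + z m) (P := fun k => w k = 0)
    (s := Ico (z m) B) (fun a b h => by simpa using h)
    (fun k hk => ⟨(k - z m).toNat, by rw [mem_Ico] at hk; dsimp only; omega⟩)
    (fun i hi => mem_Ico.2 ⟨by omega, hlt _ hi⟩),
    hfilter, card_image_of_injective _ hz.injective, card_range]

lemma exists_partition_of_word {w : ℤ → ℕ} (hw : IsMaya w) (hbal : charge w = 0) :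
    ∃ p, IsPartition p ∧ word p = w := by
  obtain ⟨z, hz, hzbot, hzeros⟩ := hw.exists_strictAnti_range_eq_zeros
  -- the `m`-th part is the number of ones to the left of the `m`-th zero `z m`
  set p : ℕ → ℕ := fun m => Nat.card {i : ℕ // w (-((i : ℤ) + 1) + z m) = 1}
  have hzp : ∀ m, zeroPos p m = z m := by
    intro m
    have h := hw.charge_comp_add_const (z m)
    rw [hbal] at h
    unfold charge at h
    beta_reduce at h
    rw [hw.natCard_zeros_add_eq hz hzeros m] at h
    simp only [zeroPos, p]
    omega
  have hp : IsPartition p := by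
    obtain ⟨A, hA⟩ := eventually_atBot.1 hw.2.1
    obtain ⟨N, hN⟩ := eventually_atTop.1 (hzbot.eventually (eventually_le_atBot A))
    refine ⟨antitone_nat_of_succ_le fun m => ?_, N, fun m hm => ?_⟩
    · have h1 := hzp m
      have h2 := hzp (m + 1)
      have := hz (Nat.lt_add_one m)
      unfold zeroPos at h1 h2
      push_cast at h2
      omega
    · refine Nat.card_eq_zero.2 (Or.inl ⟨fun ⟨i, hi⟩ => ?_⟩)
      have := hA (-((i : ℤ) + 1) + z m) (by have := hN m hm; omega)
      omega
  refine ⟨p, hp, eq_of_forall_eq_zero_iff (word_le_one p) hw.1 fun k => ?_⟩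
  rw [word_eq_zero_iff, hzeros, funext hzp]

lemma lt_natCard_iff_of_lowerSet {P : ℕ → Prop} (hP : ∀ i j, i ≤ j → P j → P i)
    {N : ℕ} (hN : ∀ i, P i → i < N) (i : ℕ) : i < Nat.card {i // P i} ↔ P i := by
  obtain h | ⟨a, ha⟩ :=
    IsLowerSet.eq_univ_or_Iio (s := Set.ofPred P) fun a b hba hb => hP _ _ hba hb
  · exact absurd (hN N (h.symm ▸ Set.mem_univ N : N ∈ Set.ofPred P)) (lt_irrefl N)
  · have hcard : Nat.card {i // P i} = a := by
      rw [show Nat.card {i // P i} = Nat.card (Set.ofPred P) from rfl, ha, ← coe_range,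
        Nat.card_coe_set_eq, Set.ncard_coe_finset, card_range]
    rw [hcard, ← Set.mem_Iio, ← ha]
    rfl

section Hooks

variable {p : ℕ → ℕ}

lemma lt_plen_iff (hp : IsPartition p) {i : ℕ} : i < plen p ↔ p i ≠ 0 := by
  obtain ⟨N, hN⟩ := hp.2
  exact lt_natCard_iff_of_lowerSet (N := N) (fun a b hab hb => by have := hp.1 hab; omega)
    (fun i hi => by by_contra h; exact hi (hN i (by omega))) i

lemma lt_pconj_iff (hp : IsPartition p) {c m : ℕ} : m < pconj p c ↔ c < p m := by
  obtain ⟨N, hN⟩ := hp.2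
  exact lt_natCard_iff_of_lowerSet (N := N) (fun a b hab hb => le_trans hb (hp.1 hab))
    (fun i hi => by by_contra h; rw [hN i (by omega)] at hi; omega) m

lemma mem_cells (hp : IsPartition p) {i c : ℕ} : (i, c) ∈ cells p ↔ c < p i := by
  rw [cells, Finset.mem_filter, mem_product, mem_range, mem_range, lt_plen_iff hp]
  dsimp only
  exact ⟨And.right, fun h => ⟨⟨by omega, h.trans_le (hp.1 (Nat.zero_le i))⟩, h⟩⟩

noncomputable def onePos (p : ℕ → ℕ) (c : ℕ) : ℤ := (c : ℤ) - pconj p c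

lemma word_onePos (hp : IsPartition p) (c : ℕ) : word p (onePos p c) = 1 := by
  have h : word p (onePos p c) ≠ 0 := fun h0 => by
    obtain ⟨m, hm⟩ := word_eq_zero_iff.1 h0
    have := lt_pconj_iff hp (c := c) (m := m)
    unfold zeroPos onePos at hm
    by_cases hc : c < p m <;> simp only [hc, iff_true, iff_false, not_lt] at this <;> omega
  have := word_le_one p (onePos p c)
  omega

lemma exists_onePos_eq (hp : IsPartition p) {k : ℤ} (hk : word p k = 1) :
    ∃ c, onePos p c = k := by
  obtain ⟨N, hN⟩ := hp.2
  have hex : ∃ m, zeroPos p m < k := ⟨max N (-k).toNat, by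
    rw [zeroPos, hN _ (le_max_left _ _)]; omega⟩
  have hne : ∀ m, zeroPos p m ≠ k := fun m h => by
    have := word_eq_zero_iff.2 ⟨m, h⟩; omega
  -- `r` is the number of zeros to the right of `k`, i.e. the length of column `k + r`
  set r := Nat.find hex
  have hr : zeroPos p r < k := Nat.find_spec hex
  have hbefore : ∀ m < r, k < zeroPos p m := fun m hm =>
    lt_of_le_of_ne (not_lt.1 (Nat.find_min hex hm)) (hne m).symm
  have hpr : (p r : ℤ) < k + r + 1 := by unfold zeroPos at hr; omega
  have hr0 : 0 ≤ k + r := by unfold zeroPos at hr; omega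
  refine ⟨(k + r).toNat, ?_⟩
  suffices pconj p (k + r).toNat = r by rw [onePos, this]; omega
  refine le_antisymm (not_lt.1 fun h => ?_) (not_lt.1 fun h => ?_)
  · have := (lt_pconj_iff hp).1 h
    omega
  · have hm := hbefore (r - 1) (by omega)
    unfold zeroPos at hm
    have := (lt_pconj_iff hp (c := (k + r).toNat) (m := r - 1)).2 (by omega)
    omega

lemma hookLen_eq (hp : IsPartition p) {i c : ℕ} (h : c < p i) :
    (hookLen p i c : ℤ) = zeroPos p i - onePos p c := by
  have := (lt_pconj_iff hp).2 h
  unfold hookLen zeroPos onePos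
  omega

lemma mem_hooks_iff (hp : IsPartition p) {n : ℕ} :
    n ∈ hooks p ↔ ∃ j, word p j = 1 ∧ word p (j + n) = 0 := by
  rw [hooks, Multiset.mem_map]
  constructor
  · rintro ⟨⟨i, c⟩, hs, rfl⟩
    have hc := (mem_cells hp).1 hs
    refine ⟨onePos p c, word_onePos hp c, word_eq_zero_iff.2 ⟨i, ?_⟩⟩
    have := hookLen_eq hp hc
    dsimp only
    omega
  · rintro ⟨j, h1, h0⟩
    obtain ⟨c, rfl⟩ := exists_onePos_eq hp h1
    obtain ⟨i, hi⟩ := word_eq_zero_iff.1 h0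
    have hc : c < p i := by
      by_contra h
      have := (lt_pconj_iff hp (c := c) (m := i)).not.2 h
      unfold zeroPos onePos at hi
      omega
    refine ⟨(i, c), (mem_cells hp).2 hc, ?_⟩
    have := hookLen_eq hp hc
    dsimp only
    omega

lemma isCore_iff (hp : IsPartition p) {n : ℕ} :
    IsCore n p ↔ ∀ j, word p j ≤ word p (j + n) := by
  rw [IsCore, mem_hooks_iff hp, not_exists]
  refine forall_congr' fun j => ?_
  have := word_le_one p j
  have := word_le_one p (j + n)
  omega

end Hooks

section Littlewood

variable {n : ℕ} {p ω : ℕ → ℕ}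

lemma isCore_iff_monotone_modSubword (hn : 0 < n) (hω : IsPartition ω) :
    IsCore n ω ↔ ∀ k < n, Monotone (modSubword n k (word ω)) := by
  rw [isCore_iff hω]
  constructor
  · refine fun h k _ => monotone_int_of_le_succ fun i => ?_
    simpa only [modSubword, mul_add, mul_one, add_right_comm] using h (n * i + k)
  · intro h j
    have := h _ (emod_toNat_lt hn j) (Int.le_add_one (le_refl (j / n)))
    simp only [modSubword] at this
    rwa [mul_add, mul_one, add_right_comm, mul_ediv_add_emod_toNat hn] at this

lemma isCoreOf_iff :
    IsCoreOf n p ω ↔ ∀ k < n, modSubword n k (word ω) = stepWord (qcharge n p k) := by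
  refine forall₂_congr fun k _ => ?_
  rw [funext_iff]
  refine forall_congr' fun i => ?_
  have := word_le_one ω (n * i + k)
  unfold subword modSubword stepWord
  split_ifs <;> omega

lemma IsCoreOf.qcharge_eq {k : ℕ} (h : IsCoreOf n p ω) (hk : k < n) :
    qcharge n ω k = qcharge n p k := by
  show charge (modSubword n k (word ω)) = _
  rw [isCoreOf_iff.1 h k hk, charge_stepWord]

lemma sum_qcharge (hn : 0 < n) (hp : IsPartition p) : ∑ k ∈ range n, qcharge n p k = 0 := by
  rw [← charge_word hp, (isMaya_word hp).charge_eq_sum_charge_modSubword hn]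
  rfl

lemma exists_isCoreOf (hn : 0 < n) (hp : IsPartition p) :
    ∃ ω, (IsPartition ω ∧ IsCore n ω) ∧ IsCoreOf n p ω := by
  have hsteps : ∀ k < n, IsMaya (stepWord (qcharge n p k)) := fun k _ => isMaya_stepWord _
  have hbal : charge (interleave n fun k => stepWord (qcharge n p k)) = 0 := by
    rw [charge_interleave hn hsteps]
    simp only [charge_stepWord]
    exact sum_qcharge hn hp
  obtain ⟨ω, hω, hωw⟩ := exists_partition_of_word (isMaya_interleave hn hsteps) hbal
  have hsub : ∀ k < n, modSubword n k (word ω) = stepWord (qcharge n p k) := fun k hk => by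
    rw [hωw, modSubword_interleave hn hk]
  refine ⟨ω, ⟨hω, (isCore_iff_monotone_modSubword hn hω).2 fun k hk => ?_⟩,
    isCoreOf_iff.2 hsub⟩
  rw [hsub k hk]
  exact monotone_stepWord _

lemma exists_isQuotientAt (hn : 0 < n) (hp : IsPartition p) (k : ℕ) :
    ∃ ν, IsPartition ν ∧ IsQuotientAt n p k ν := by
  have hw := isMaya_modSubword hn (isMaya_word hp) k
  obtain ⟨ν, hν, hνw⟩ := exists_partition_of_word (hw.comp_add_const (qcharge n p k))
    (by rw [hw.charge_comp_add_const]; exact sub_self _)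
  exact ⟨ν, hν, fun i => congrFun hνw i⟩

lemma exists_of_isCore (hn : 0 < n) (hω : IsPartition ω) (hcore : IsCore n ω)
    {ν : Fin n → ℕ → ℕ} (hν : ∀ k, IsPartition (ν k)) :
    ∃ p, IsPartition p ∧ IsCoreOf n p ω ∧ ∀ k : Fin n, IsQuotientAt n p k (ν k) := by
  have : NeZero n := ⟨hn.ne'⟩
  set v : ℕ → ℤ → ℕ := fun k i => word (ν (Fin.ofNat n k)) (i + -qcharge n ω k)
  have hv : ∀ k, IsMaya (v k) := fun k => (isMaya_word (hν _)).comp_add_const _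
  have hvc : ∀ k, charge (v k) = qcharge n ω k := fun k => by
    rw [(isMaya_word (hν _)).charge_comp_add_const, charge_word (hν _), zero_sub, neg_neg]
  obtain ⟨p, hp, hpw⟩ := exists_partition_of_word (isMaya_interleave hn fun k _ => hv k) (by
    rw [charge_interleave hn fun k _ => hv k, sum_congr rfl fun k _ => hvc k, sum_qcharge hn hω])
  have hsub : ∀ k < n, modSubword n k (word p) = v k := fun k hk => by
    rw [hpw, modSubword_interleave hn hk]
  have hq : ∀ k < n, qcharge n p k = qcharge n ω k := fun k hk => by
    rw [← hvc, ← hsub k hk]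
    rfl
  refine ⟨p, hp, isCoreOf_iff.2 fun k hk => ?_, fun k i => ?_⟩
  · rw [hq k hk]
    exact (isMaya_modSubword hn (isMaya_word hω) k).eq_stepWord_of_monotone
      ((isCore_iff_monotone_modSubword hn hω).1 hcore k hk)
  · show _ = modSubword n k (word p) _
    rw [hsub k k.isLt, hq k k.isLt]
    simp only [v, Fin.ofNat_val_eq_self, add_neg_cancel_right]

lemma eq_of_modSubword_word_eq (hn : 0 < n) {q : ℕ → ℕ} (hp : IsPartition p)
    (hq : IsPartition q) (h : ∀ k < n, modSubword n k (word p) = modSubword n k (word q)) :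
    p = q :=
  word_injective hp hq <| by
    rw [← interleave_modSubword hn (word p), ← interleave_modSubword hn (word q)]
    exact interleave_congr hn h

lemma IsCoreOf.unique (hn : 0 < n) {ω' : ℕ → ℕ} (hω : IsPartition ω)
    (hω' : IsPartition ω') (h : IsCoreOf n p ω) (h' : IsCoreOf n p ω') : ω = ω' :=
  eq_of_modSubword_word_eq hn hω hω' fun k hk => by
    rw [isCoreOf_iff.1 h k hk, isCoreOf_iff.1 h' k hk]

lemma IsQuotientAt.unique {k : ℕ} {ν ν' : ℕ → ℕ} (hν : IsPartition ν)
    (hν' : IsPartition ν') (h : IsQuotientAt n p k ν) (h' : IsQuotientAt n p k ν') : ν = ν' :=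
  word_injective hν hν' (funext fun i => (h i).trans (h' i).symm)

lemma eq_of_isCoreOf_of_isQuotientAt (hn : 0 < n) {q : ℕ → ℕ} (hp : IsPartition p)
    (hq : IsPartition q) {ν : Fin n → ℕ → ℕ} (hpω : IsCoreOf n p ω)
    (hqω : IsCoreOf n q ω)
    (hpν : ∀ k : Fin n, IsQuotientAt n p k (ν k))
    (hqν : ∀ k : Fin n, IsQuotientAt n q k (ν k)) :
    p = q :=
  eq_of_modSubword_word_eq hn hp hq fun k hk => funext fun i => by
    have hc : qcharge n p k = qcharge n q k :=
      (hpω.qcharge_eq hk).symm.trans (hqω.qcharge_eq hk)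
    have h1 := hpν ⟨k, hk⟩ (i - qcharge n p k)
    have h2 := hqν ⟨k, hk⟩ (i - qcharge n q k)
    rw [sub_add_cancel] at h1 h2
    rw [hc] at h1
    exact h1.symm.trans h2

end Littlewood

/-- For every integer `n ≥ 2`, the Littlewood decomposition
`λ ↦ (core_n(λ), quot_n(λ))` is a bijection from the set of all partitions onto
`𝒞_n × 𝒫^n`, where `𝒞_n` is the set of `n`-cores. -/
theorem littlewood_decomposition_bijective (n : ℕ) (hn : 2 ≤ n) :
    ∃ Φ : {p : ℕ → ℕ // IsPartition p} →
        {ω : ℕ → ℕ // IsPartition ω ∧ IsCore n ω} × (Fin n → {ν : ℕ → ℕ // IsPartition ν}),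
      Function.Bijective Φ ∧
      ∀ p : {p : ℕ → ℕ // IsPartition p},
        IsCoreOf n p.1 ((Φ p).1).1 ∧
        ∀ k : Fin n, IsQuotientAt n p.1 (k : ℕ) (((Φ p).2 k).1) := by
  have hn0 : 0 < n := by omega
  have hdecomp : ∀ p : {p : ℕ → ℕ // IsPartition p},
      ∃ q : {ω : ℕ → ℕ // IsPartition ω ∧ IsCore n ω} ×
          (Fin n → {ν : ℕ → ℕ // IsPartition ν}),
        IsCoreOf n p.1 q.1.1 ∧ ∀ k : Fin n, IsQuotientAt n p.1 k (q.2 k).1 := by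
    rintro ⟨p, hp⟩
    obtain ⟨ω, hω, hpω⟩ := exists_isCoreOf hn0 hp
    choose ν hν hpν using fun k : Fin n => exists_isQuotientAt hn0 hp k
    exact ⟨(⟨ω, hω⟩, fun k => ⟨ν k, hν k⟩), hpω, hpν⟩
  choose Φ hΦ using hdecomp
  refine ⟨Φ, ⟨fun p q hpq => ?_, fun ⟨ω, ν⟩ => ?_⟩, hΦ⟩
  · have hq := hΦ q
    rw [← hpq] at hq
    exact Subtype.ext (eq_of_isCoreOf_of_isQuotientAt hn0 p.2 q.2 (hΦ p).1 hq.1 (hΦ p).2 hq.2)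
  · obtain ⟨p, hp, hpω, hpν⟩ := exists_of_isCore hn0 ω.2.1 ω.2.2 fun k => (ν k).2
    obtain ⟨hΦω, hΦν⟩ := hΦ ⟨p, hp⟩
    refine ⟨⟨p, hp⟩, Prod.ext (Subtype.ext ?_) (funext fun k => Subtype.ext ?_)⟩
    · exact IsCoreOf.unique hn0 (Φ ⟨p, hp⟩).1.2.1 ω.2.1 hΦω hpω
    · exact (hΦν k).unique ((Φ ⟨p, hp⟩).2 k).2 (ν k).2 (hpν k)
end

section
/- Let ω be an n-core and φ_n(ω) = (m_0,…,m_{n−1}) ∈ ℤ^n its n-charge. Then ω is self-conjugate if and only if m_{n−1−i} = −m_i for all i ∈ {0,…,⌊n/2⌋}; in particular if n is odd then m_{⌊n/2⌋} = 0. Moreover the map from the set 𝒞_n^s of self-conjugate n-cores to ℤ^{⌊n/2⌋} sending ω to (m_0,…,m_{⌊n/2⌋−1}) is a bijection, and |ω| = n Σ_{i=0}^{⌊n/2⌋−1} m_i² + Σ_{i=0}^{⌊n/2⌋−1} (2i − n + 1) m_i. -/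
open scoped Classical

/-!
A partition is determined by its β-set `{λ_i - i}` (the positions of the `0`'s of its word).
Conjugation swaps the β-set with the reflection `k ↦ -1 - k` of its complement, and `ω` is an
`n`-core iff its β-set is stable under `k ↦ k - n`; so the β-set of an `n`-core is
`{q n + i : i < n, q < m_i}`. The reflection sends residue `i` to `n - 1 - i`, which turns
self-conjugacy into `m_{n-1-i} = -m_i`. Conversely every charge vector with `∑ m_i = 0` is the
charge of a core: enumerating the set `{q n + i : q < m_i}` decreasingly gives the parts. The
size is read off a window `[-B, B)` outside of which the β-set is trivial:
`|λ| = ∑_{k ∈ β, -B ≤ k < B} k + B (B + 1) / 2`, and summing over residues gives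
`|ω| = (n/2) ∑ m_i² + ∑ i m_i`, which folds to the stated formula under antisymmetry.
-/

open Finset

theorem lt_card_subtype_iff_of_antitone {P : ℕ → Prop} (hP : Antitone P) (hfin : ∃ N, ¬ P N)
    (i : ℕ) : i < Nat.card {i // P i} ↔ P i := by
  have key : ∀ i, P i ↔ i < Nat.find hfin := fun i =>
    ⟨fun h => lt_of_not_ge fun hi => Nat.find_spec hfin (hP hi h),
      fun h => not_not.1 (Nat.find_min hfin h)⟩
  rw [Nat.card_congr ((Equiv.subtypeEquivRight key).trans Fin.equivSubtype.symm), Nat.card_fin,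
    key]

theorem sInf_le_iff_mem_of_add_one_mem {U : Set ℤ} (hne : U.Nonempty) (hbdd : BddBelow U)
    (hsucc : ∀ q ∈ U, q + 1 ∈ U) (q : ℤ) : sInf U ≤ q ↔ q ∈ U := by
  refine ⟨fun hq => ?_, fun hq => csInf_le hbdd hq⟩
  induction q, hq using Int.leInduction with
  | base => exact Int.csInf_mem hne hbdd
  | succ q _ ih => exact hsucc q ih

theorem two_mul_sum_Ico_int {a b : ℤ} (hab : a ≤ b) :
    2 * ∑ q ∈ Ico a b, q = (b - a) * (a + b - 1) := by
  induction b, hab using Int.leInduction with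
  | base => simp
  | succ b hab ih => rw [← sum_Ico_add_eq_sum_Ico_add_one hab, mul_add, ih]; ring

def beta (p : ℕ → ℕ) (m : ℕ) : ℤ := (p m : ℤ) - ((m : ℤ) + 1)

def betaSet (p : ℕ → ℕ) : Set ℤ := Set.range (beta p)

theorem word_eq_one_iff {p : ℕ → ℕ} {k : ℤ} : word p k = 1 ↔ k ∉ betaSet p := by
  simp only [word, betaSet, beta, Set.mem_range, eq_comm (b := k)]
  split_ifs with h <;> simp [h]

namespace IsPartition

variable {p q : ℕ → ℕ} {i j : ℕ} {k : ℤ}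

theorem lt_pconj_iff (hp : IsPartition p) : i < pconj p j ↔ j < p i :=
  lt_card_subtype_iff_of_antitone (fun _ _ hab h => lt_of_lt_of_le h (hp.1 hab))
    (by obtain ⟨N, hN⟩ := hp.2; exact ⟨N, by simp [hN N le_rfl]⟩) i

theorem lt_plen_iff (hp : IsPartition p) : i < plen p ↔ 0 < p i := by
  rw [plen, Nat.card_congr (Equiv.subtypeEquivRight fun i => Nat.pos_iff_ne_zero.symm)]
  exact hp.lt_pconj_iff

theorem pconj_isPartition (hp : IsPartition p) : IsPartition (pconj p) := by
  refine ⟨fun a b hab => ?_, p 0, fun j hj => ?_⟩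
  · by_contra! h
    have := hp.lt_pconj_iff.1 h
    exact lt_irrefl _ (hp.lt_pconj_iff.2 (hab.trans_lt this))
  · by_contra h
    have := hp.lt_pconj_iff.1 (Nat.pos_of_ne_zero h)
    exact absurd (this.trans_le (hp.1 (Nat.zero_le 0))) (by omega)

theorem beta_add_le (hp : IsPartition p) (m d : ℕ) : beta p (m + d) + d ≤ beta p m := by
  have := hp.1 (Nat.le_add_right m d)
  simp only [beta]; push_cast; omega

theorem beta_strictAnti (hp : IsPartition p) : StrictAnti (beta p) := by
  intro a b hab
  obtain ⟨d, rfl⟩ := Nat.exists_eq_add_of_lt hab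
  have := hp.beta_add_le a (d + 1)
  rw [← add_assoc] at this
  omega

theorem eq_of_betaSet_eq (hp : IsPartition p) (hq : IsPartition q) (h : betaSet p = betaSet q) :
    p = q := by
  have := (hp.beta_strictAnti.dual_right.range_inj hq.beta_strictAnti.dual_right).1 h
  funext m
  have hm := congrFun this m
  simp only [Function.comp_apply, OrderDual.toDual_inj, beta] at hm
  omega

theorem not_mem_betaSet_iff (hp : IsPartition p) : k ∉ betaSet p ↔ ∃ j : ℕ, k = j - pconj p j := by
  simp only [betaSet, Set.mem_range, not_exists]
  constructor
  · intro hk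
    have hex : ∃ i, beta p i < k := ⟨(p 0 - k).toNat, by
      have := hp.beta_add_le 0 (p 0 - k).toNat
      simp only [beta, zero_add] at this ⊢; omega⟩
    set i := Nat.find hex
    have hi : beta p i < k := Nat.find_spec hex
    have above : ∀ m < i, k < beta p m := fun m hm =>
      lt_of_le_of_ne (not_lt.1 (Nat.find_min hex hm)) (Ne.symm (hk m))
    have hi0 : -(i + 1 : ℤ) ≤ beta p i := by simp only [beta]; omega
    refine ⟨(k + i).toNat, ?_⟩
    have hconj : pconj p (k + i).toNat = i := eq_of_forall_lt_iff fun m => by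
      rw [hp.lt_pconj_iff]
      rcases lt_or_ge m i with hm | hm
      · have h1 := hp.beta_add_le m (i - 1 - m)
        have h2 := above (i - 1) (by omega)
        rw [show m + (i - 1 - m) = i - 1 by omega] at h1
        simp only [beta] at h1 h2; omega
      · have := hp.beta_add_le i (m - i)
        rw [show i + (m - i) = m by omega] at this
        simp only [beta] at this hi; omega
    rw [hconj]; omega
  · rintro ⟨j, rfl⟩ m hm
    have := hp.lt_pconj_iff (i := m) (j := j)
    simp only [beta] at hm
    omega

theorem mem_betaSet_pconj (hp : IsPartition p) : k ∈ betaSet (pconj p) ↔ -1 - k ∉ betaSet p := by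
  rw [hp.not_mem_betaSet_iff]
  simp only [betaSet, beta, Set.mem_range]
  exact exists_congr fun j => by omega

theorem selfConj_iff (hp : IsPartition p) :
    SelfConj p ↔ ∀ k, k ∈ betaSet p ↔ -1 - k ∉ betaSet p := by
  refine ⟨fun h k => ?_, fun h => hp.eq_of_betaSet_eq hp.pconj_isPartition ?_⟩
  · conv_lhs => rw [h]
    exact hp.mem_betaSet_pconj
  · ext k
    rw [h, hp.mem_betaSet_pconj]

theorem mem_cells_iff (hp : IsPartition p) : (i, j) ∈ cells p ↔ j < p i := by
  simp only [cells, mem_filter, mem_product, mem_range, and_iff_right_iff_imp]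
  exact fun h => ⟨hp.lt_plen_iff.2 (by omega), h.trans_le (hp.1 (Nat.zero_le i))⟩

theorem hookLen_eq (hp : IsPartition p) (h : j < p i) :
    (hookLen p i j : ℤ) = beta p i - (j - pconj p j) := by
  have := hp.lt_pconj_iff.2 h
  simp only [hookLen, beta]
  omega

theorem mem_hooks_iff {n : ℕ} (hp : IsPartition p) (hn : 0 < n) :
    n ∈ hooks p ↔ ∃ k ∈ betaSet p, k - n ∉ betaSet p := by
  simp only [hooks, Multiset.mem_map, Finset.mem_val, Prod.exists, hp.mem_cells_iff]
  constructor
  · rintro ⟨i, j, hj, hhook⟩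
    have := hp.hookLen_eq hj
    exact ⟨beta p i, ⟨i, rfl⟩, hp.not_mem_betaSet_iff.2 ⟨j, by omega⟩⟩
  · rintro ⟨_, ⟨i, rfl⟩, hk⟩
    obtain ⟨j, hij⟩ := hp.not_mem_betaSet_iff.1 hk
    have hj : j < p i := by
      by_contra! hj
      have := hp.lt_pconj_iff (i := i) (j := j)
      simp only [beta] at hij
      omega
    have := hp.hookLen_eq hj
    exact ⟨i, j, hj, by omega⟩

theorem isCore_iff {n : ℕ} (hp : IsPartition p) (hn : 0 < n) :
    IsCore n p ↔ ∀ k ∈ betaSet p, k - n ∈ betaSet p := by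
  simp only [IsCore, hp.mem_hooks_iff hn, not_exists, not_and, not_not]

end IsPartition

/-- `{q n + i : i < n, q < m_i}`, the β-set of the `n`-core with `n`-charge `m`. -/
def chargeSet (n : ℕ) (m : ℕ → ℤ) : Set ℤ := {k | k / n < m (k % n).toNat}

section chargeSet

variable {n : ℕ} {m m' : ℕ → ℤ} {i : ℕ} {q k : ℤ}

theorem exists_eq_mul_add (hn : 0 < n) (k : ℤ) : ∃ q : ℤ, ∃ i < n, k = q * n + i :=
  have h0 := Int.emod_nonneg k (by omega : (n : ℤ) ≠ 0)
  have h1 := Int.emod_lt_of_pos k (by omega : (0 : ℤ) < n)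
  ⟨k / n, (k % n).toNat, by omega, by
    rw [Int.toNat_of_nonneg h0]; exact (Int.ediv_mul_add_emod k n).symm⟩

theorem mul_add_ediv_emod (hi : i < n) : (q * n + i) / n = q ∧ (q * n + i) % n = i :=
  (Int.ediv_emod_unique (by omega)).2 ⟨by ring, by omega, by omega⟩

theorem mul_add_mem_chargeSet_iff (hi : i < n) : q * n + i ∈ chargeSet n m ↔ q < m i := by
  have h := mul_add_ediv_emod (q := q) hi
  simp only [chargeSet, Set.mem_ofPred_eq, h.1, h.2, Int.toNat_natCast]

theorem chargeSet_congr (hn : 0 < n) (h : ∀ i < n, m i = m' i) :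
    chargeSet n m = chargeSet n m' := by
  ext k
  obtain ⟨q, i, hi, rfl⟩ := exists_eq_mul_add hn k
  rw [mul_add_mem_chargeSet_iff hi, mul_add_mem_chargeSet_iff hi, h i hi]

theorem sub_mem_chargeSet (hn : 0 < n) (hk : k ∈ chargeSet n m) : k - n ∈ chargeSet n m := by
  obtain ⟨q, i, hi, rfl⟩ := exists_eq_mul_add hn k
  rw [show q * n + i - n = (q - 1) * n + i by ring, mul_add_mem_chargeSet_iff hi]
  rw [mul_add_mem_chargeSet_iff hi] at hk
  omega

theorem chargeSet_symm_iff (hn : 0 < n) :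
    (∀ k, k ∈ chargeSet n m ↔ -1 - k ∉ chargeSet n m) ↔ ∀ i < n, m (n - 1 - i) = -m i := by
  have reflect : ∀ q : ℤ, ∀ i < n, -1 - (q * n + i) = (-q - 1) * n + (n - 1 - i : ℕ) := by
    intro q i hi; push_cast [Nat.sub_sub, Nat.cast_sub (show 1 + i ≤ n by omega)]; ring
  constructor
  · intro h i hi
    refine eq_of_forall_lt_iff fun q => ?_
    have := h (q * n + (n - 1 - i : ℕ))
    rw [mul_add_mem_chargeSet_iff (by omega), reflect q _ (by omega),
      show n - 1 - (n - 1 - i) = i by omega, mul_add_mem_chargeSet_iff hi] at this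
    omega
  · intro h k
    obtain ⟨q, i, hi, rfl⟩ := exists_eq_mul_add hn k
    rw [reflect q i hi, mul_add_mem_chargeSet_iff hi, mul_add_mem_chargeSet_iff (by omega), h i hi]
    omega

end chargeSet

theorem ncharge_eq_of_betaSet_eq {n : ℕ} {p : ℕ → ℕ} {m : ℕ → ℤ} (h : betaSet p = chargeSet n m)
    {i : ℕ} (hi : i < n) : ncharge n p i = m i := by
  have : {q : ℤ | word p (q * n + i) = 1} = Set.Ici (m i) := by
    ext q
    simp [word_eq_one_iff, h, mul_add_mem_chargeSet_iff hi]
  rw [ncharge, this, csInf_Ici]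

namespace IsPartition

variable {n : ℕ} {p : ℕ → ℕ} {m : ℕ → ℤ}

theorem mem_betaSet_of_lt (hp : IsPartition p) {k : ℤ} (hk : k < -plen p) : k ∈ betaSet p :=
  ⟨(-k - 1).toNat, by
    have : p (-k - 1).toNat = 0 := Nat.eq_zero_of_not_pos fun h => by
      have := hp.lt_plen_iff.2 h; omega
    simp only [beta, this]; omega⟩

theorem lt_of_mem_betaSet (hp : IsPartition p) {k : ℤ} (hk : k ∈ betaSet p) : k < p 0 := by
  obtain ⟨m, rfl⟩ := hk
  have := hp.beta_add_le 0 m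
  simp only [beta, zero_add] at this ⊢
  omega

theorem mul_add_mem_betaSet_iff (hp : IsPartition p) (hn : 0 < n) (hc : IsCore n p) (i : ℕ)
    (q : ℤ) : q * n + i ∈ betaSet p ↔ q < ncharge n p i := by
  set U := {q : ℤ | word p (q * n + i) = 1}
  have hU : ∀ q, q ∈ U ↔ q * n + i ∉ betaSet p := fun q => word_eq_one_iff
  have hne : U.Nonempty :=
    ⟨p 0, (hU _).2 fun h => by have := hp.lt_of_mem_betaSet h; nlinarith⟩
  have hbdd : BddBelow U := ⟨-(plen p + i + 1 : ℤ), fun q hq => by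
    by_contra! hlt
    exact (hU q).1 hq (hp.mem_betaSet_of_lt (by nlinarith))⟩
  have hup : ∀ q ∈ U, q + 1 ∈ U := fun q hq => (hU _).2 fun h => (hU q).1 hq <| by
    have := (hp.isCore_iff hn).1 hc _ h
    rwa [show (q + 1) * n + i - n = q * n + i by ring] at this
  rw [ncharge, ← not_le, sInf_le_iff_mem_of_add_one_mem hne hbdd hup, hU, not_not]

theorem betaSet_eq_chargeSet (hp : IsPartition p) (hn : 0 < n) (hc : IsCore n p) :
    betaSet p = chargeSet n (ncharge n p) := by
  ext k
  obtain ⟨q, i, hi, rfl⟩ := exists_eq_mul_add hn k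
  rw [mul_add_mem_chargeSet_iff hi, hp.mul_add_mem_betaSet_iff hn hc]

theorem isCore_of_betaSet_eq (hp : IsPartition p) (hn : 0 < n) (h : betaSet p = chargeSet n m) :
    IsCore n p :=
  (hp.isCore_iff hn).2 fun _ hk => h ▸ sub_mem_chargeSet hn (h ▸ hk)

theorem eq_of_ncharge_eq {p' : ℕ → ℕ} (hp : IsPartition p) (hp' : IsPartition p') (hn : 0 < n)
    (hc : IsCore n p) (hc' : IsCore n p') (h : ∀ i < n, ncharge n p i = ncharge n p' i) :
    p = p' :=
  hp.eq_of_betaSet_eq hp' <| by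
    rw [hp.betaSet_eq_chargeSet hn hc, hp'.betaSet_eq_chargeSet hn hc', chargeSet_congr hn h]

theorem selfConj_iff_ncharge (hp : IsPartition p) (hn : 0 < n) (hc : IsCore n p) :
    SelfConj p ↔ ∀ i < n, ncharge n p (n - 1 - i) = -ncharge n p i := by
  rw [hp.selfConj_iff, hp.betaSet_eq_chargeSet hn hc, chargeSet_symm_iff hn]

end IsPartition

theorem exists_isPartition_betaSet_eq (S : Set ℤ) (B : ℕ) (hlow : ∀ k : ℤ, k < -B → k ∈ S)
    (hhigh : ∀ k ∈ S, k < B) (hcard : #{k ∈ Ico (-B : ℤ) B | k ∈ S} = B) :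
    ∃ p, IsPartition p ∧ betaSet p = S := by
  set T : ℕ → Prop := fun t => (B - 1 - t : ℤ) ∈ S
  have hT : ∀ t, 2 * B ≤ t → T t := fun t ht => hlow _ (by omega)
  have hinf : (Set.ofPred T).Infinite :=
    Set.infinite_of_forall_exists_gt fun a => ⟨a + 2 * B + 1, hT _ (by omega), by omega⟩
  -- `B - 1 - nth T m` enumerates `S` decreasingly
  set e := Nat.nth T
  have he : StrictMono e := Nat.nth_strictMono hinf
  have hcount : Nat.count T (2 * B) = B := by
    rw [Nat.count_eq_card_filter_range, ← hcard]
    refine card_nbij' (fun t => (B - 1 - t : ℤ)) (fun k => (B - 1 - k).toNat) ?_ ?_ ?_ ?_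
    · intro t ht
      simp only [coe_filter, mem_range, Set.mem_ofPred_eq, mem_Ico] at ht ⊢
      exact ⟨⟨by omega, by omega⟩, ht.2⟩
    · intro k hk
      simp only [coe_filter, mem_range, Set.mem_ofPred_eq, mem_Ico] at hk ⊢
      refine ⟨by omega, ?_⟩
      show (B - 1 - ((B - 1 - k).toNat : ℕ) : ℤ) ∈ S
      rw [show (B - 1 - (B - 1 - k).toNat : ℤ) = k by omega]
      exact hk.2
    · intro t _; simp only; omega
    · intro k hk
      simp only [coe_filter, Set.mem_ofPred_eq, mem_Ico] at hk
      simp only; omega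
  have heB : ∀ d, e (B + d) = 2 * B + d := fun d => by
    have : Nat.count T (2 * B + d) = B + d := by
      rw [Nat.count_add, hcount, Nat.count_of_forall fun k _ => hT _ (by omega)]
    rw [← this]
    exact Nat.nth_count (hT _ (by omega))
  have hle : ∀ m, e m ≤ B + m := fun m => by
    have := he.add_le_nat B m
    rw [heB] at this
    omega
  refine ⟨fun m => B + m - e m, ⟨fun a b hab => ?_, B, fun m hm => ?_⟩, ?_⟩
  · have := he.add_le_nat (b - a) a
    rw [Nat.sub_add_cancel hab] at this
    show B + b - e b ≤ B + a - e a
    omega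
  · obtain ⟨d, rfl⟩ := Nat.exists_eq_add_of_le hm
    simp only [heB]; omega
  · have hbeta : ∀ m, beta (fun m => B + m - e m) m = B - 1 - e m := fun m => by
      have := hle m
      simp only [beta]; omega
    ext k
    simp only [betaSet, Set.mem_range, hbeta]
    constructor
    · rintro ⟨m, rfl⟩
      exact Nat.nth_mem_of_infinite hinf m
    · intro hk
      have hkB := hhigh k hk
      obtain ⟨m, hm⟩ : (B - 1 - k).toNat ∈ Set.range e := by
        rw [Nat.range_nth_of_infinite hinf]
        show (B - 1 - (B - 1 - k).toNat : ℤ) ∈ S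
        rwa [show (B - 1 - (B - 1 - k).toNat : ℤ) = k by omega]
      exact ⟨m, by omega⟩

namespace IsPartition

variable {p : ℕ → ℕ} {B : ℕ}

theorem window_eq_image (hp : IsPartition p) (h0 : p 0 ≤ B) (hB : p B = 0) :
    {k ∈ Ico (-B : ℤ) B | k ∈ betaSet p} = (range B).image (beta p) := by
  ext k
  simp only [mem_filter, mem_Ico, mem_image, mem_range, betaSet, Set.mem_range]
  constructor
  · rintro ⟨⟨hlo, -⟩, m, rfl⟩
    refine ⟨m, ?_, rfl⟩
    by_contra! hm
    have := hp.1 hm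
    simp only [beta] at hlo
    omega
  · rintro ⟨m, hm, rfl⟩
    have := hp.beta_add_le 0 m
    simp only [beta, zero_add] at this ⊢
    exact ⟨⟨by omega, by omega⟩, m, rfl⟩

theorem card_window (hp : IsPartition p) (h0 : p 0 ≤ B) (hB : p B = 0) :
    #{k ∈ Ico (-B : ℤ) B | k ∈ betaSet p} = B := by
  rw [hp.window_eq_image h0 hB, card_image_of_injective _ hp.beta_strictAnti.injective, card_range]

theorem psize_eq_sum_window (hp : IsPartition p) (h0 : p 0 ≤ B) (hB : p B = 0) :
    (psize p : ℤ) = ∑ k ∈ Ico (-B : ℤ) B with k ∈ betaSet p, k + ∑ m ∈ range B, ((m : ℤ) + 1) := by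
  have hlen : plen p ≤ B := not_lt.1 fun h => by have := hp.lt_plen_iff.1 h; omega
  have hsize : psize p = ∑ m ∈ range B, p m :=
    sum_subset (range_subset_range.2 hlen) fun m _ hm => by
      simpa [hp.lt_plen_iff] using hm
  rw [hp.window_eq_image h0 hB, sum_image hp.beta_strictAnti.injective.injOn, hsize,
    ← sum_add_distrib]
  push_cast
  simp [beta]

end IsPartition

theorem two_mul_sum_range_natCast (n : ℕ) : 2 * ∑ i ∈ range n, (i : ℤ) = n * (n - 1) := by
  induction n with
  | zero => simp
  | succ n ih => rw [sum_range_succ, mul_add, ih]; push_cast; ring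

theorem sum_window_chargeSet {M : Type*} [AddCommMonoid M] {n L : ℕ} {m : ℕ → ℤ} (hn : 0 < n)
    (hL : ∀ i < n, -(L : ℤ) ≤ m i ∧ m i ≤ L) (g : ℤ → M) :
    ∑ k ∈ Ico (-↑(L * n) : ℤ) ↑(L * n) with k ∈ chargeSet n m, g k =
      ∑ i ∈ range n, ∑ q ∈ Ico (-(L : ℤ)) (m i), g (q * n + i) := by
  rw [sum_sigma']
  symm
  refine sum_bij (fun x _ => x.2 * n + x.1) ?_ ?_ ?_ fun _ _ => rfl
  · rintro ⟨i, q⟩ h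
    simp only [mem_sigma, mem_range, mem_Ico] at h
    have := hL i h.1
    simp only [mem_filter, mem_Ico, mul_add_mem_chargeSet_iff h.1]
    push_cast
    exact ⟨⟨by nlinarith, by nlinarith⟩, h.2.2⟩
  · rintro ⟨i, q⟩ h ⟨i', q'⟩ h' heq
    simp only [mem_sigma, mem_range] at h h' heq
    have e := mul_add_ediv_emod (q := q) h.1
    have e' := mul_add_ediv_emod (q := q') h'.1
    rw [heq] at e
    obtain rfl : q = q' := e.1.symm.trans e'.1
    obtain rfl : i = i' := by omega
    rfl
  · intro k hk
    obtain ⟨q, i, hi, rfl⟩ := exists_eq_mul_add hn k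
    simp only [mem_filter, mem_Ico, mul_add_mem_chargeSet_iff hi] at hk
    push_cast at hk
    refine ⟨⟨i, q⟩, ?_, rfl⟩
    simp only [mem_sigma, mem_range, mem_Ico]
    exact ⟨hi, by nlinarith, hk.2⟩

theorem exists_nat_bound (n L₀ : ℕ) (m : ℕ → ℤ) :
    ∃ L ≥ L₀, ∀ i < n, -(L : ℤ) ≤ m i ∧ m i ≤ L := by
  refine ⟨L₀ + ∑ i ∈ range n, (m i).natAbs, by omega, fun i hi => ?_⟩
  have : (m i).natAbs ≤ ∑ i ∈ range n, (m i).natAbs :=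
    single_le_sum (f := fun i => (m i).natAbs) (fun _ _ => Nat.zero_le _) (mem_range.2 hi)
  omega

theorem card_window_chargeSet {n L : ℕ} {m : ℕ → ℤ} (hn : 0 < n)
    (hL : ∀ i < n, -(L : ℤ) ≤ m i ∧ m i ≤ L) :
    (#{k ∈ Ico (-↑(L * n) : ℤ) ↑(L * n) | k ∈ chargeSet n m} : ℤ) = ∑ i ∈ range n, m i + n * L := by
  have hcol : ∀ i ∈ range n, ∑ q ∈ Ico (-(L : ℤ)) (m i), (1 : ℤ) = m i + L := fun i hi => by
    have := hL i (mem_range.1 hi)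
    rw [sum_const, Int.card_Ico, nsmul_one, Int.toNat_of_nonneg (by omega)]
    ring
  rw [natCast_card_filter, ← sum_filter, sum_window_chargeSet hn hL, sum_congr rfl hcol,
    sum_add_distrib, sum_const, card_range, nsmul_eq_mul]

theorem exists_isPartition_betaSet_eq_chargeSet {n : ℕ} {m : ℕ → ℤ} (hn : 0 < n)
    (hsum : ∑ i ∈ range n, m i = 0) : ∃ p, IsPartition p ∧ betaSet p = chargeSet n m := by
  obtain ⟨L, -, hL⟩ := exists_nat_bound n 0 m
  refine exists_isPartition_betaSet_eq _ (L * n) (fun k hk => ?_) (fun k hk => ?_) ?_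
  · obtain ⟨q, i, hi, rfl⟩ := exists_eq_mul_add hn k
    have := hL i hi
    rw [mul_add_mem_chargeSet_iff hi]
    push_cast at hk
    nlinarith
  · obtain ⟨q, i, hi, rfl⟩ := exists_eq_mul_add hn k
    have := hL i hi
    rw [mul_add_mem_chargeSet_iff hi] at hk
    push_cast
    nlinarith
  · have h := card_window_chargeSet hn hL
    rw [hsum, zero_add, show (n : ℤ) * L = ((L * n : ℕ) : ℤ) by push_cast; ring] at h
    exact Nat.cast_injective h

namespace IsPartition

variable {n : ℕ} {p : ℕ → ℕ}

theorem exists_window (hp : IsPartition p) (hn : 0 < n) (m : ℕ → ℤ) :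
    ∃ L : ℕ, p 0 ≤ L * n ∧ p (L * n) = 0 ∧ ∀ i < n, -(L : ℤ) ≤ m i ∧ m i ≤ L := by
  obtain ⟨N, hN⟩ := hp.2
  obtain ⟨L, hL0, hL⟩ := exists_nat_bound n (p 0 + N) m
  have : L ≤ L * n := Nat.le_mul_of_pos_right L hn
  exact ⟨L, by omega, hN _ (by omega), hL⟩

theorem sum_ncharge (hp : IsPartition p) (hn : 0 < n) (hc : IsCore n p) :
    ∑ i ∈ range n, ncharge n p i = 0 := by
  obtain ⟨L, h0, hB, hL⟩ := hp.exists_window hn (ncharge n p)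
  have := card_window_chargeSet hn hL
  rw [← hp.betaSet_eq_chargeSet hn hc, hp.card_window h0 hB] at this
  push_cast at this
  linarith

theorem two_mul_psize (hp : IsPartition p) (hn : 0 < n) (hc : IsCore n p) :
    2 * (psize p : ℤ) = n * ∑ i ∈ range n, ncharge n p i ^ 2
      + 2 * ∑ i ∈ range n, (i : ℤ) * ncharge n p i := by
  set m := ncharge n p
  obtain ⟨L, h0, hB, hL⟩ := hp.exists_window hn m
  have hcol : ∀ i ∈ range n, 2 * ∑ q ∈ Ico (-(L : ℤ)) (m i), (q * n + i) =
      n * m i ^ 2 + 2 * (i * m i) - n * m i + 2 * L * i - n * (L ^ 2 + L) := fun i hi => by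
    have := hL i (mem_range.1 hi)
    rw [sum_add_distrib, ← sum_mul, sum_const, Int.card_Ico, nsmul_eq_mul,
      Int.toNat_of_nonneg (by omega), mul_add, ← mul_assoc, two_mul_sum_Ico_int (by omega)]
    ring
  rw [hp.psize_eq_sum_window h0 hB, hp.betaSet_eq_chargeSet hn hc, sum_window_chargeSet hn hL,
    mul_add, mul_sum, sum_congr rfl hcol]
  simp only [sum_add_distrib, sum_sub_distrib, ← mul_sum, sum_const, card_range, nsmul_eq_mul]
  have h1 := two_mul_sum_range_natCast n
  have h2 := two_mul_sum_range_natCast (L * n)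
  rw [hp.sum_ncharge hn hc]
  push_cast at h2 ⊢
  linear_combination (L : ℤ) * h1 + h2

end IsPartition

section Antisymm

variable {n : ℕ} {f g : ℕ → ℤ}

theorem antisymm_iff_le_half (hn : 0 < n) :
    (∀ i < n, f (n - 1 - i) = -f i) ↔ ∀ i ≤ n / 2, f (n - 1 - i) = -f i := by
  refine ⟨fun h i hi => h i (by omega), fun h i hi => ?_⟩
  rcases le_or_gt i (n / 2) with hi' | hi'
  · exact h i hi'
  · have := h (n - 1 - i) (by omega)
    rw [show n - 1 - (n - 1 - i) = i by omega] at this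
    omega

theorem middle_eq_zero_of_antisymm (hodd : Odd n) (h : ∀ i < n, f (n - 1 - i) = -f i) :
    f (n / 2) = 0 := by
  obtain ⟨k, rfl⟩ := hodd
  have := h k (by omega)
  rw [show 2 * k + 1 - 1 - k = k by omega] at this
  rw [show (2 * k + 1) / 2 = k by omega]
  omega

theorem eq_of_antisymm_of_eq_half (hf : ∀ i < n, f (n - 1 - i) = -f i)
    (hg : ∀ i < n, g (n - 1 - i) = -g i) (h : ∀ i < n / 2, f i = g i) {i : ℕ} (hi : i < n) :
    f i = g i := by
  rcases lt_or_ge i (n / 2) with hi' | hi'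
  · exact h i hi'
  · have hf' := hf (n - 1 - i) (by omega)
    have hg' := hg (n - 1 - i) (by omega)
    rw [show n - 1 - (n - 1 - i) = i by omega] at hf' hg'
    rcases lt_or_ge (n - 1 - i) (n / 2) with hj | hj
    · have := h _ hj
      omega
    · rw [show n - 1 - i = i by omega] at hf' hg'
      omega

theorem sum_range_eq_zero_of_antisymm (h : ∀ i < n, f (n - 1 - i) = -f i) :
    ∑ i ∈ range n, f i = 0 := by
  have := sum_range_reflect f n
  rw [sum_congr rfl fun i hi => h i (mem_range.1 hi), sum_neg_distrib] at this
  omega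

theorem sum_range_eq_sum_range_half {M : Type*} [AddCommMonoid M] (f : ℕ → M)
    (hmid : Odd n → f (n / 2) = 0) :
    ∑ i ∈ range n, f i = ∑ i ∈ range (n / 2), (f i + f (n - 1 - i)) := by
  rw [sum_add_distrib]
  obtain ⟨h, rfl | rfl⟩ := Nat.even_or_odd' n
  · rw [show 2 * h / 2 = h by omega, two_mul, sum_range_add,
      ← sum_range_reflect (fun x => f (h + x)) h]
    exact congrArg _ (sum_congr rfl fun i hi => by have := mem_range.1 hi; congr 1; omega)
  · rw [show (2 * h + 1) / 2 = h by omega] at hmid ⊢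
    rw [show 2 * h + 1 = h + (h + 1) by ring, sum_range_add, sum_range_succ',
      ← sum_range_reflect (fun x => f (h + (x + 1))) h, add_zero, hmid ⟨h, rfl⟩, add_zero]
    exact congrArg _ (sum_congr rfl fun i hi => by have := mem_range.1 hi; congr 1; omega)

theorem sum_sq_of_antisymm (h : ∀ i < n, f (n - 1 - i) = -f i) :
    ∑ i ∈ range n, f i ^ 2 = 2 * ∑ i ∈ range (n / 2), f i ^ 2 := by
  rw [sum_range_eq_sum_range_half _ fun hodd => by
    rw [middle_eq_zero_of_antisymm hodd h, zero_pow two_ne_zero], mul_sum]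
  exact sum_congr rfl fun i hi => by rw [h i (by have := mem_range.1 hi; omega)]; ring

theorem sum_mul_of_antisymm (h : ∀ i < n, f (n - 1 - i) = -f i) :
    ∑ i ∈ range n, (i : ℤ) * f i = ∑ i ∈ range (n / 2), (2 * (i : ℤ) - n + 1) * f i := by
  rw [sum_range_eq_sum_range_half _ fun hodd => by
    rw [middle_eq_zero_of_antisymm hodd h, mul_zero]]
  refine sum_congr rfl fun i hi => ?_
  have hi : i < n / 2 := mem_range.1 hi
  rw [h i (by omega), Nat.cast_sub (by omega), Nat.cast_sub (by omega)]
  push_cast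
  ring

def antisymmExtend (n : ℕ) (v : Fin (n / 2) → ℤ) (i : ℕ) : ℤ :=
  if h : i < n / 2 then v ⟨i, h⟩ else if h' : n - 1 - i < n / 2 then -v ⟨n - 1 - i, h'⟩ else 0

theorem antisymmExtend_of_lt (v : Fin (n / 2) → ℤ) {i : ℕ} (hi : i < n / 2) :
    antisymmExtend n v i = v ⟨i, hi⟩ :=
  dif_pos hi

theorem antisymmExtend_antisymm (v : Fin (n / 2) → ℤ) {i : ℕ} (hi : i < n) :
    antisymmExtend n v (n - 1 - i) = -antisymmExtend n v i := by
  have e : n - 1 - (n - 1 - i) = i := by omega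
  unfold antisymmExtend
  split_ifs <;> first | omega | simp [e]

end Antisymm

/-- Let `ω` be an `n`-core with `n`-charge `φ_n(ω) = (m_0, …, m_{n-1})`.  Then
`ω` is self-conjugate iff `m_{n-1-i} = -m_i` for all `i ∈ {0, …, ⌊n/2⌋}`
(in particular `m_{⌊n/2⌋} = 0` when `n` is odd); the map sending a
self-conjugate `n`-core `ω` to `(m_0, …, m_{⌊n/2⌋-1})` is a bijection onto
`ℤ^{⌊n/2⌋}`; and `|ω| = n ∑_{i<⌊n/2⌋} m_i² + ∑_{i<⌊n/2⌋} (2i - n + 1) m_i`. -/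
theorem self_conjugate_core_charge (n : ℕ) (hn : 2 ≤ n) :
    (∀ ω : ℕ → ℕ, IsPartition ω → IsCore n ω →
      (SelfConj ω ↔ ∀ i ≤ n / 2, ncharge n ω (n - 1 - i) = - ncharge n ω i)) ∧
    (∀ ω : ℕ → ℕ, IsPartition ω → IsCore n ω → SelfConj ω → Odd n →
      ncharge n ω (n / 2) = 0) ∧
    Function.Bijective
      (fun ω : {w : ℕ → ℕ // IsPartition w ∧ IsCore n w ∧ SelfConj w} =>
        fun i : Fin (n / 2) => ncharge n ω.1 (i : ℕ)) ∧
    (∀ ω : ℕ → ℕ, IsPartition ω → IsCore n ω → SelfConj ω →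
      (psize ω : ℤ) =
        (n : ℤ) * ∑ i ∈ Finset.range (n / 2), (ncharge n ω i) ^ 2
          + ∑ i ∈ Finset.range (n / 2), (2 * (i : ℤ) - (n : ℤ) + 1) * ncharge n ω i) := by
  have hn0 : 0 < n := by omega
  have antisymm : ∀ ω, IsPartition ω → IsCore n ω → SelfConj ω →
      ∀ i < n, ncharge n ω (n - 1 - i) = -ncharge n ω i :=
    fun ω hp hc => (hp.selfConj_iff_ncharge hn0 hc).1
  refine ⟨fun ω hp hc => (hp.selfConj_iff_ncharge hn0 hc).trans (antisymm_iff_le_half hn0),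
    fun ω hp hc hsc hodd => middle_eq_zero_of_antisymm hodd (antisymm ω hp hc hsc), ⟨?_, ?_⟩, ?_⟩
  · rintro ⟨ω, hp, hc, hsc⟩ ⟨ω', hp', hc', hsc'⟩ h
    exact Subtype.ext <| hp.eq_of_ncharge_eq hp' hn0 hc hc' fun i hi =>
      eq_of_antisymm_of_eq_half (antisymm ω hp hc hsc) (antisymm ω' hp' hc' hsc')
        (fun i hi => congrFun h ⟨i, hi⟩) hi
  · intro v
    have hv := fun i (hi : i < n) => antisymmExtend_antisymm v hi
    obtain ⟨ω, hp, hS⟩ :=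
      exists_isPartition_betaSet_eq_chargeSet hn0 (sum_range_eq_zero_of_antisymm hv)
    have hc := hp.isCore_of_betaSet_eq hn0 hS
    have hm := fun i (hi : i < n) => ncharge_eq_of_betaSet_eq hS hi
    refine ⟨⟨ω, hp, hc, (hp.selfConj_iff_ncharge hn0 hc).2 fun i hi => ?_⟩, funext fun i => ?_⟩
    · rw [hm i hi, hm _ (by omega), hv i hi]
    · show ncharge n ω i = v i
      rw [hm i (by omega), antisymmExtend_of_lt]
  · intro ω hp hc hsc
    have h := hp.two_mul_psize hn0 hc
    rw [sum_sq_of_antisymm (antisymm ω hp hc hsc), sum_mul_of_antisymm (antisymm ω hp hc hsc)] at h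
    linarith
end
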